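/- Let $L$ be a unimodular lattice of rank $r$ (a free $\mathbb{Z}$-module with a unimodular symmetric bilinear form) and let $N \subseteq L$ be spanned by $k$ pairwise orthogonal vectors of square $-3$. Define $\sigma = k - \dim_{\mathbb{F}_3} \mathrm{Image}[N \otimes \mathbb{F}_3 \to L \otimes \mathbb{F}_3]$. Then $k - r/2 \leq \sigma \leq k/2$. -/

import Mathlib

/-!
Reducing the `vᵢ` mod 3 gives a `k × r` matrix `V̄` over `𝔽₃` whose rank is the dimension of the
image, and `V̄ B̄ V̄ᵀ = 0` since the Gram matrix of the `vᵢ` is `-3 • 1`. As `B̄` is invertible,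
`rank V̄ + rank V̄ᵀ ≤ r`, i.e. `2 rank V̄ ≤ r`. Conversely, the left kernel of `V̄` is totally isotropic
for the dot product on `𝔽₃ᵏ`: lifting `a`, `b` in it to integer vectors gives `aV ≡ bV ≡ 0 (mod 3)`,
so `-3 (a ⬝ b) = (aV) B (bV)ᵀ` is divisible by 9. Hence `k - rank V̄ ≤ k / 2`.
-/

open Module Matrix

theorem LinearMap.BilinForm.two_mul_finrank_le_of_isotropic {K V : Type*} [Field K]
    [AddCommGroup V] [Module K V] [FiniteDimensional K V] {B : LinearMap.BilinForm K V}
    (hB : B.Nondegenerate) {W : Submodule K V} (hW : ∀ x ∈ W, ∀ y ∈ W, B x y = 0) :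
    2 * finrank K W ≤ finrank K V := by
  have hle : finrank K W ≤ finrank K (B.orthogonal W) :=
    Submodule.finrank_mono fun x hx y hy => hW y hy x hx
  have := LinearMap.BilinForm.finrank_orthogonal hB W
  have := W.finrank_le
  omega

theorem Submodule.two_mul_finrank_le_of_dotProduct_eq_zero {F n : Type*} [Field F] [Fintype n]
    {W : Submodule F (n → F)} (hW : ∀ x ∈ W, ∀ y ∈ W, x ⬝ᵥ y = 0) :
    2 * finrank F W ≤ Fintype.card n := by
  have hB : (dotProductBilin F F : LinearMap.BilinForm F (n → F)).Nondegenerate :=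
    ⟨fun x hx => dotProduct_eq_zero x hx,
      fun y hy => dotProduct_eq_zero y fun x => dotProduct_comm y x ▸ hy x⟩
  simpa using LinearMap.BilinForm.two_mul_finrank_le_of_isotropic hB hW

theorem Matrix.two_mul_rank_le_of_mul_mul_transpose_eq_zero {m n F : Type*} [Fintype m]
    [Fintype n] [DecidableEq n] [Field F] {A : Matrix m n F} {M : Matrix n n F}
    (hM : IsUnit M.det) (h : A * M * Aᵀ = 0) : 2 * A.rank ≤ Fintype.card n := by
  have := rank_add_rank_le_card_of_mul_eq_zero h
  rw [rank_mul_eq_left_of_isUnit_det M A hM, rank_transpose] at this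
  omega

theorem Matrix.of_mul_mul_transpose_of_apply {m n R : Type*} [Fintype n] [CommSemiring R]
    (v : m → n → R) (B : Matrix n n R) (i j : m) :
    (of v * B * (of v)ᵀ) i j = v i ⬝ᵥ B *ᵥ v j := by
  rw [mul_apply', dotProduct_mulVec]
  rfl

theorem Matrix.dotProduct_vecMul_mulVec_vecMul {m n R : Type*} [Fintype m] [Fintype n]
    [CommSemiring R] (V : Matrix m n R) (B : Matrix n n R) (a b : m → R) :
    (a ᵥ* V) ⬝ᵥ B *ᵥ (b ᵥ* V) = a ⬝ᵥ (V * B * Vᵀ) *ᵥ b := by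
  rw [← mulVec_transpose V b, mulVec_mulVec, dotProduct_mulVec, vecMul_vecMul,
    ← dotProduct_mulVec, Matrix.mul_assoc]

theorem ZMod.intCastRingHom_comp_cast {m : Type*} {p : ℕ} (a : m → ZMod p) :
    Int.castRingHom (ZMod p) ∘ (fun i => ((a i).cast : ℤ)) = a :=
  funext fun i => ZMod.intCast_zmod_cast (a i)

section Reduction

variable {m n : Type*} [Fintype m] {p : ℕ} {V : Matrix m n ℤ}

theorem Matrix.exists_vecMul_cast_eq_smul_of_vecMul_map_eq_zero {a : m → ZMod p}
    (ha : a ᵥ* V.map (Int.castRingHom (ZMod p)) = 0) :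
    ∃ x : n → ℤ, (fun i => ((a i).cast : ℤ)) ᵥ* V = (p : ℤ) • x := by
  have hdvd j : (p : ℤ) ∣ ((fun i => ((a i).cast : ℤ)) ᵥ* V) j := by
    rw [← ZMod.intCast_zmod_eq_zero_iff_dvd]
    change Int.castRingHom (ZMod p) _ = 0
    rw [RingHom.map_vecMul, ZMod.intCastRingHom_comp_cast, ha, Pi.zero_apply]
  choose x hx using hdvd
  exact ⟨x, funext hx⟩

variable [Fintype n] {B : Matrix n n ℤ} {u : ℤ}

theorem Matrix.dotProduct_eq_zero_of_vecMul_map_eq_zero [DecidableEq m] [NeZero p]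
    (hu : IsCoprime u p) (hV : V * B * Vᵀ = (p : ℤ) • u • 1) {a b : m → ZMod p}
    (ha : a ᵥ* V.map (Int.castRingHom (ZMod p)) = 0)
    (hb : b ᵥ* V.map (Int.castRingHom (ZMod p)) = 0) :
    a ⬝ᵥ b = 0 := by
  set a' : m → ℤ := fun i => ((a i).cast : ℤ)
  set b' : m → ℤ := fun i => ((b i).cast : ℤ)
  obtain ⟨x, hx⟩ := exists_vecMul_cast_eq_smul_of_vecMul_map_eq_zero ha
  obtain ⟨y, hy⟩ := exists_vecMul_cast_eq_smul_of_vecMul_map_eq_zero hb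
  have hgram : (p : ℤ) * (p * (x ⬝ᵥ B *ᵥ y)) = p * (u * (a' ⬝ᵥ b')) := by
    have := dotProduct_vecMul_mulVec_vecMul V B a' b'
    rw [hx, hy, hV, mulVec_smul, smul_dotProduct, dotProduct_smul, smul_mulVec, smul_mulVec,
      one_mulVec, dotProduct_smul, dotProduct_smul] at this
    simpa only [smul_eq_mul, mul_assoc] using this
  have hp : (p : ℤ) ≠ 0 := Int.natCast_ne_zero.mpr (NeZero.ne p)
  have hdvd : (p : ℤ) ∣ a' ⬝ᵥ b' :=
    hu.symm.dvd_of_dvd_mul_left ⟨_, (mul_left_cancel₀ hp hgram).symm⟩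
  have hcast : a ⬝ᵥ b = ((a' ⬝ᵥ b' : ℤ) : ZMod p) := by
    change _ = Int.castRingHom (ZMod p) _
    rw [RingHom.map_dotProduct, ZMod.intCastRingHom_comp_cast, ZMod.intCastRingHom_comp_cast]
  rw [hcast, ZMod.intCast_zmod_eq_zero_iff_dvd]
  exact hdvd

theorem Matrix.card_le_two_mul_rank_map [DecidableEq m] [Fact p.Prime] (hu : IsCoprime u p)
    (hV : V * B * Vᵀ = (p : ℤ) • u • 1) :
    Fintype.card m ≤ 2 * (V.map (Int.castRingHom (ZMod p))).rank := by
  set Vp := V.map (Int.castRingHom (ZMod p))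
  have hker : 2 * finrank (ZMod p) (LinearMap.ker Vpᵀ.mulVecLin) ≤ Fintype.card m := by
    refine Submodule.two_mul_finrank_le_of_dotProduct_eq_zero fun a ha b hb => ?_
    rw [LinearMap.mem_ker, mulVecLin_apply, mulVec_transpose] at ha hb
    exact dotProduct_eq_zero_of_vecMul_map_eq_zero hu hV ha hb
  have hrank := LinearMap.finrank_range_add_finrank_ker Vpᵀ.mulVecLin
  rw [← rank, rank_transpose, finrank_fintype_fun_eq_card] at hrank
  omega

theorem Matrix.two_mul_rank_map_le [DecidableEq n] [Fact p.Prime] {G : Matrix m m ℤ}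
    (hB : IsUnit B.det) (hV : V * B * Vᵀ = (p : ℤ) • G) :
    2 * (V.map (Int.castRingHom (ZMod p))).rank ≤ Fintype.card n := by
  refine two_mul_rank_le_of_mul_mul_transpose_eq_zero (M := B.map (Int.castRingHom (ZMod p)))
    (RingHom.map_det (Int.castRingHom (ZMod p)) B ▸ hB.map _) ?_
  rw [← transpose_map, ← Matrix.map_mul, ← Matrix.map_mul, hV]
  ext i j
  simp only [map_apply, smul_apply, smul_eq_mul, map_mul, map_natCast, ZMod.natCast_self,
    zero_mul, zero_apply]

end Reduction

theorem defect_bounds_general (r k : ℕ) (B : Matrix (Fin r) (Fin r) ℤ)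
    (hunimod : IsUnit B.det)
    (v : Fin k → Fin r → ℤ)
    (hdiag : ∀ i, dotProduct (v i) (B.mulVec (v i)) = -3)
    (horth : ∀ i j, i ≠ j → dotProduct (v i) (B.mulVec (v j)) = 0) :
    (k : ℚ) - r / 2 ≤
      (k : ℚ) - (Module.finrank (ZMod 3)
        (Submodule.span (ZMod 3)
          (Set.range fun i : Fin k => fun j : Fin r => ((v i j : ZMod 3))))) ∧
    (k : ℚ) - (Module.finrank (ZMod 3)
        (Submodule.span (ZMod 3)
          (Set.range fun i : Fin k => fun j : Fin r => ((v i j : ZMod 3))))) ≤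
      (k : ℚ) / 2 := by
  have hgram : of v * B * (of v)ᵀ = ((3 : ℕ) : ℤ) • (-1 : ℤ) • 1 := by
    ext i j
    rw [of_mul_mul_transpose_of_apply]
    rcases eq_or_ne i j with rfl | hij
    · simp [hdiag]
    · simp [horth i j hij, hij]
  have hspan : finrank (ZMod 3) (Submodule.span (ZMod 3)
      (Set.range fun i : Fin k => fun j : Fin r => ((v i j : ZMod 3)))) =
      ((of v).map (Int.castRingHom (ZMod 3))).rank :=
    (rank_eq_finrank_span_row _).symm
  have hupper := two_mul_rank_map_le hunimod hgram
  have hlower := card_le_two_mul_rank_map isCoprime_one_left.neg_left hgram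
  rw [Fintype.card_fin] at hupper hlower
  qify at hupper hlower
  rw [hspan]
  constructor <;> linarith

/-- Lemma 5.1: for a unimodular symmetric bilinear form `B` of rank `r` over `ℤ` and
`k` pairwise orthogonal vectors of square `-3`, the defect
`σ = k - dim_𝔽₃ Image[N ⊗ 𝔽₃ → L ⊗ 𝔽₃]` satisfies `k - r/2 ≤ σ ≤ k/2`. -/
theorem defect_bounds (r k : ℕ) (B : Matrix (Fin r) (Fin r) ℤ)
    (hsym : B.IsSymm) (hunimod : IsUnit B.det)
    (v : Fin k → Fin r → ℤ)
    (hdiag : ∀ i, dotProduct (v i) (B.mulVec (v i)) = -3)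
    (horth : ∀ i j, i ≠ j → dotProduct (v i) (B.mulVec (v j)) = 0) :
    (k : ℚ) - r / 2 ≤
      (k : ℚ) - (Module.finrank (ZMod 3)
        (Submodule.span (ZMod 3)
          (Set.range fun i : Fin k => fun j : Fin r => ((v i j : ZMod 3))))) ∧
    (k : ℚ) - (Module.finrank (ZMod 3)
        (Submodule.span (ZMod 3)
          (Set.range fun i : Fin k => fun j : Fin r => ((v i j : ZMod 3))))) ≤
      (k : ℚ) / 2 :=
  defect_bounds_general r k B hunimod v hdiag horth
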